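/- Let A, B ∈ M₂(ℂ). The linear map on the space sl₂(ℂ) of traceless 2×2 complex matrices given by ξ ↦ AξB − (tr(AξB)/2)·I is a well-defined endomorphism of sl₂(ℂ), and its trace (as an endomorphism of the 3-dimensional space sl₂(ℂ)) equals tr(A)·tr(B) − ½·tr(AB). -/

import Mathlib

/-- `sl₂(ℂ)`: the space of traceless `2×2` complex matrices, as a submodule of `M₂(ℂ)`. -/
noncomputable def sl2 : Submodule ℂ (Matrix (Fin 2) (Fin 2) ℂ) where
  carrier := {X | X.trace = 0}
  add_mem' := by
    intro a b ha hb
    simp only [Set.mem_setOf_eq] at *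
    simp [Matrix.trace_add, ha, hb]
  zero_mem' := by simp
  smul_mem' := by
    intro c a ha
    simp only [Set.mem_setOf_eq] at *
    simp [Matrix.trace_smul, ha]

/-- For `A, B ∈ M₂(ℂ)`, the endomorphism of `sl₂(ℂ)` given by
`ξ ↦ AξB − (tr(AξB)/2)·I` (the traceless part of `AξB`).  That it lands in `sl₂(ℂ)` and is
linear is part of the definition (well-definedness). -/
noncomputable def tracelessConj (A B : Matrix (Fin 2) (Fin 2) ℂ) : sl2 →ₗ[ℂ] sl2 where
  toFun ξ := ⟨A * ξ.1 * B - ((A * ξ.1 * B).trace / 2) • (1 : Matrix (Fin 2) (Fin 2) ℂ), by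
    show Matrix.trace _ = 0
    simp [Matrix.trace_sub, Matrix.trace_smul, Matrix.trace_one]⟩
  map_add' := by
    intro a b
    apply Subtype.ext
    simp [Matrix.mul_add, Matrix.add_mul, Matrix.trace_add, add_div, add_smul]
    abel
  map_smul' := by
    intro c a
    apply Subtype.ext
    simp [Matrix.mul_smul, Matrix.smul_mul, Matrix.trace_smul, smul_smul, mul_div_assoc,
      smul_sub]

/-!
With `L X = A * X * B`, the map is `π ∘ L ∘ ι` for the inclusion `ι : sl₂ → M₂` and the projection
`π X = X₀`. Cycling the trace moves the computation to `M₂`, where `ι ∘ π = id - P` with the rank-one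
projection `P X = (tr X / 2) • 1`. Hence the trace is `tr L - tr (L ∘ P)`; here `tr L = tr A * tr B`
(`L` is `A ⊗ Bᵀ`), and `L ∘ P` is `X ↦ (tr X / 2) • A B`, of trace `tr (A B) / 2`.
-/

open Matrix

theorem Matrix.trace_mulLeftRight {R n : Type*} [CommSemiring R] [Fintype n]
    (A B : Matrix n n R) :
    LinearMap.trace R (Matrix n n R) (LinearMap.mulLeftRight R (A, B)) = A.trace * B.trace := by
  classical
  have diag (i j : n) : (A * single i j (1 : R) * B) i j = A i i * B j j := by
    simp [Matrix.mul_apply, single_apply, ite_and]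
  rw [LinearMap.trace_eq_matrix_trace R (stdBasis R n n), Matrix.trace, Fintype.sum_prod_type]
  simp only [Matrix.diag, LinearMap.toMatrix_apply, stdBasis_eq_single,
    LinearMap.mulLeftRight_apply]
  exact (Finset.sum_congr rfl fun i _ => Finset.sum_congr rfl fun j _ => diag i j).trans
    (Finset.sum_mul_sum _ _ _ _).symm

noncomputable def halfTrace : Matrix (Fin 2) (Fin 2) ℂ →ₗ[ℂ] ℂ :=
  (2 : ℂ)⁻¹ • traceLinearMap (Fin 2) ℂ ℂ

noncomputable def scalarPart : Module.End ℂ (Matrix (Fin 2) (Fin 2) ℂ) :=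
  halfTrace.smulRight 1

noncomputable def tracelessPart : Matrix (Fin 2) (Fin 2) ℂ →ₗ[ℂ] sl2 :=
  (LinearMap.id - scalarPart).codRestrict sl2 fun X => by
    show Matrix.trace _ = 0
    simp only [scalarPart, halfTrace, LinearMap.sub_apply, LinearMap.id_coe, id_eq,
      LinearMap.coe_smulRight, LinearMap.smul_apply, traceLinearMap_apply, smul_eq_mul, trace_sub,
      trace_smul, trace_one, Fintype.card_fin, Nat.cast_ofNat]
    ring

theorem subtype_comp_tracelessPart :
    sl2.subtype ∘ₗ tracelessPart = LinearMap.id - scalarPart := rfl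

theorem tracelessConj_eq_comp (A B : Matrix (Fin 2) (Fin 2) ℂ) :
    tracelessConj A B = tracelessPart ∘ₗ LinearMap.mulLeftRight ℂ (A, B) ∘ₗ sl2.subtype := by
  ext ξ : 2
  simp [tracelessConj, tracelessPart, scalarPart, halfTrace, div_eq_inv_mul]

theorem mulLeftRight_comp_scalarPart (A B : Matrix (Fin 2) (Fin 2) ℂ) :
    LinearMap.mulLeftRight ℂ (A, B) ∘ₗ scalarPart = halfTrace.smulRight (A * B) := by
  ext X : 1
  simp [scalarPart]

/-- For `A, B ∈ M₂(ℂ)`, the trace of the endomorphism `ξ ↦ AξB − (tr(AξB)/2)·I` of the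
3-dimensional space `sl₂(ℂ)` equals `tr(A)·tr(B) − ½·tr(AB)`. -/
theorem trace_tracelessConj (A B : Matrix (Fin 2) (Fin 2) ℂ) :
    LinearMap.trace ℂ sl2 (tracelessConj A B) = A.trace * B.trace - (A * B).trace / 2 := by
  set L := LinearMap.mulLeftRight ℂ (A, B)
  calc LinearMap.trace ℂ sl2 (tracelessConj A B)
      = LinearMap.trace ℂ _ (L ∘ₗ sl2.subtype ∘ₗ tracelessPart) := by
        rw [tracelessConj_eq_comp, LinearMap.trace_comp_comm', LinearMap.comp_assoc]
    _ = LinearMap.trace ℂ _ L - LinearMap.trace ℂ _ (halfTrace.smulRight (A * B)) := by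
        rw [subtype_comp_tracelessPart, LinearMap.comp_sub, LinearMap.comp_id, map_sub,
          mulLeftRight_comp_scalarPart]
    _ = A.trace * B.trace - (A * B).trace / 2 := by
        rw [trace_mulLeftRight, LinearMap.trace_smulRight]
        simp [halfTrace, div_eq_inv_mul]
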